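/- arXiv:1411.0505 — 2 statements merged into one kernel-verified Lean document; each statement's English description precedes it below -/
import Mathlib

section
/- Assume the set of Matchings generated by D₁ and D₂ is infinite. Then closure( ⋃_{w∈D} φ_w(K₁+K₂) ) = K₁+K₂, where D is the set of primitive Matchings and φ_w is the similitude associated to the Matching w. -/
open Finset Pointwise

/-- The block `(0,…,0, β^k * a)` of length `k` associated to the similitude
`x ↦ x/β^k + a`. -/
noncomputable def digitBlock (β : ℝ) (k : ℕ) (a : ℝ) : List ℝ :=
  List.replicate (k - 1) 0 ++ [β ^ k * a]

/-- `w` is a Matching generated by the digital sets `P` and `Q`: it is the coordinatewise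
sum of a concatenation of blocks from `P` and a concatenation of blocks from `Q`
having the same total length as `w`. -/
def IsMatching {n m : ℕ} (P : Fin n → List ℝ) (Q : Fin m → List ℝ) (w : List ℝ) : Prop :=
  ∃ (is : List (Fin n)) (js : List (Fin m)),
    is ≠ [] ∧ js ≠ [] ∧
    (is.map P).flatten.length = w.length ∧
    (js.map Q).flatten.length = w.length ∧
    w = List.zipWith (· + ·) (is.map P).flatten (js.map Q).flatten

/-- A Matching is primitive if it is not a concatenation of two or more shorter Matchings. -/
def IsPrimMatching {n m : ℕ} (P : Fin n → List ℝ) (Q : Fin m → List ℝ) (w : List ℝ) : Prop :=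
  IsMatching P Q w ∧
    ¬ ∃ u v : List ℝ, u ≠ [] ∧ v ≠ [] ∧ IsMatching P Q u ∧ IsMatching P Q v ∧ w = u ++ v

/-- The value `Σ_{i=1}^{L} c_i β^{-i}` of the block `w = (c_1,…,c_L)` in base `β`. -/
noncomputable def blockVal (β : ℝ) (w : List ℝ) : ℝ :=
  ∑ i : Fin w.length, w.get i / β ^ (i.1 + 1)

/-- The similitude `φ_w(x) = x/β^{|w|} + Σ_i c_i β^{-i}` associated to a block `w`. -/
noncomputable def phiBlock (β : ℝ) (w : List ℝ) (x : ℝ) : ℝ :=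
  x / β ^ w.length + blockVal β w

/-- `x : ℕ → ℝ` (indexed from 0, representing `(x_k)_{k ≥ 1}`) is the infinite
concatenation of the nonempty blocks `W 0, W 1, …`. -/
def IsConcatSeq (W : ℕ → List ℝ) (x : ℕ → ℝ) : Prop :=
  (∀ t, W t ≠ []) ∧
    ∀ (t : ℕ) (i : Fin (W t).length),
      x ((∑ s ∈ Finset.range t, (W s).length) + i) = (W t).get i

/-- `x` is an infinite concatenation of blocks from the family `Ws`. -/
def IsInfConcatFrom (Ws : Set (List ℝ)) (x : ℕ → ℝ) : Prop :=
  ∃ W : ℕ → List ℝ, (∀ t, W t ∈ Ws) ∧ IsConcatSeq W x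

/-- The value `Σ_{k=1}^{∞} x_k β^{-k}` of a sequence (indexed from 0). -/
noncomputable def seqVal (β : ℝ) (x : ℕ → ℝ) : ℝ :=
  ∑' k : ℕ, x k / β ^ (k + 1)

/-- The set `E` of values of infinite concatenations of Matchings. -/
def Eset {n m : ℕ} (β : ℝ) (P : Fin n → List ℝ) (Q : Fin m → List ℝ) : Set ℝ :=
  {z | ∃ x : ℕ → ℝ, IsInfConcatFrom {w | IsMatching P Q w} x ∧ z = seqVal β x}

/-- `a` is a coding: the coordinatewise sum of an infinite concatenation of blocks from
`P` and an infinite concatenation of blocks from `Q`. -/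
def IsCoding {n m : ℕ} (P : Fin n → List ℝ) (Q : Fin m → List ℝ) (a : ℕ → ℝ) : Prop :=
  ∃ x y : ℕ → ℝ, IsInfConcatFrom (Set.range P) x ∧ IsInfConcatFrom (Set.range Q) y ∧
    ∀ k, a k = x k + y k

/-- The set `C` of codings having a tail containing no segment that is a Matching. -/
def Cset {n m : ℕ} (P : Fin n → List ℝ) (Q : Fin m → List ℝ) : Set (ℕ → ℝ) :=
  {a | IsCoding P Q a ∧
    ∃ N : ℕ, ∀ j ≥ N, ∀ l : ℕ, 1 ≤ l →
      ¬ IsMatching P Q (List.ofFn fun i : Fin l => a (j + i))}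

/-!
Each Matching `w` is the coordinatewise sum of two concatenations of equal length, so
`φ_w(x + y) = φ_u(x) + φ_v(y)` with `φ_u`, `φ_v` compositions of the maps of the two IFSs; hence
`φ_w` maps `K₁ + K₂` into itself. Splitting off a primitive prefix `w = w₁ ++ t` (with `t` empty or
a Matching) gives `φ_w(K₁ + K₂) ⊆ φ_{w₁}(K₁ + K₂)`, so every Matching image lies in the union.

Conversely, write `x = φ_u(x₁)`, `y = φ_v(y₁)` with `u`, `v` concatenations of `N + 1` blocks.
The powers `u^|v|` and `v^|u|` have the same length, so they add up to a Matching `w`, and both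
`x + y` and `φ_w(x₁ + y₁)` lie in `φ_u(K₁) + φ_v(K₂)`, a set of diameter at most
`(diam K₁ + diam K₂) / β^N`.
-/

lemma mapsTo_of_eq_iUnion_image {α ι : Type*} {f : ι → α → α} {K : Set α}
    (hK : K = ⋃ i, f i '' K) (i : ι) : Set.MapsTo (f i) K K := by
  intro x hx
  rw [hK]
  exact Set.mem_iUnion_of_mem i (Set.mem_image_of_mem _ hx)

section BlockValue

variable {β : ℝ}

@[simp]
lemma blockVal_nil : blockVal β [] = 0 := by
  simp [blockVal]

lemma blockVal_cons (c : ℝ) (w : List ℝ) :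
    blockVal β (c :: w) = (c + blockVal β w) / β := by
  simp only [blockVal, List.length_cons, Fin.sum_univ_succ, add_div, Finset.sum_div, div_div,
    ← pow_succ]
  simp

lemma blockVal_append (u v : List ℝ) :
    blockVal β (u ++ v) = blockVal β u + blockVal β v / β ^ u.length := by
  induction u with
  | nil => simp
  | cons c u ih =>
    simp only [List.cons_append, blockVal_cons, ih, List.length_cons, pow_succ]
    ring

lemma blockVal_zipWith_add {u v : List ℝ} (h : u.length = v.length) :
    blockVal β (List.zipWith (· + ·) u v) = blockVal β u + blockVal β v := by
  induction u generalizing v with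
  | nil =>
    obtain rfl := List.length_eq_zero_iff.mp h.symm
    simp
  | cons c u ih =>
    obtain ⟨d, v, rfl⟩ := List.exists_cons_of_length_eq_add_one h.symm
    simp only [List.zipWith_cons_cons, blockVal_cons, ih (Nat.succ.inj h)]
    ring

lemma blockVal_digitBlock (hβ : β ≠ 0) {k : ℕ} (hk : 0 < k) (a : ℝ) :
    blockVal β (digitBlock β k a) = a := by
  have hzero : blockVal β (List.replicate (k - 1) 0) = 0 := by simp [blockVal]
  rw [digitBlock, blockVal_append, hzero, blockVal_cons, blockVal_nil, List.length_replicate,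
    add_zero, zero_add, div_div, ← pow_succ', Nat.sub_add_cancel hk]
  field_simp

@[simp]
lemma phiBlock_nil : phiBlock β [] = id := by
  ext x
  simp [phiBlock]

lemma phiBlock_append (u v : List ℝ) (x : ℝ) :
    phiBlock β (u ++ v) x = phiBlock β u (phiBlock β v x) := by
  simp only [phiBlock, List.length_append, blockVal_append, pow_add]
  ring

lemma phiBlock_zipWith_add {u v : List ℝ} (h : u.length = v.length) (x y : ℝ) :
    phiBlock β (List.zipWith (· + ·) u v) (x + y) = phiBlock β u x + phiBlock β v y := by
  simp only [phiBlock, blockVal_zipWith_add h, List.length_zipWith, h, min_self]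
  ring

lemma phiBlock_digitBlock (hβ : β ≠ 0) {k : ℕ} (hk : 0 < k) (a : ℝ) :
    phiBlock β (digitBlock β k a) = fun x => x / β ^ k + a := by
  ext x
  rw [phiBlock, blockVal_digitBlock hβ hk, digitBlock, List.length_append, List.length_replicate,
    List.length_singleton, Nat.sub_add_cancel hk]

lemma dist_phiBlock (hβ : 0 < β) (w : List ℝ) (x y : ℝ) :
    dist (phiBlock β w x) (phiBlock β w y) = dist x y / β ^ w.length := by
  rw [Real.dist_eq, Real.dist_eq, phiBlock, phiBlock, add_sub_add_right_eq_sub, ← sub_div,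
    abs_div, abs_of_pos (pow_pos hβ _)]

lemma dist_phiBlock_le_diam_div_pow (hβ : 1 ≤ β) {K : Set ℝ} (hK : Bornology.IsBounded K)
    {w : List ℝ} {N : ℕ} (hN : N ≤ w.length) {x y : ℝ} (hx : x ∈ K) (hy : y ∈ K) :
    dist (phiBlock β w x) (phiBlock β w y) ≤ Metric.diam K / β ^ N := by
  rw [dist_phiBlock (by linarith) w x y]
  exact div_le_div₀ Metric.diam_nonneg (Metric.dist_le_diam_of_mem hK hx hy) (by positivity)
    (pow_le_pow_right₀ hβ hN)

end BlockValue

section Words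

variable {β : ℝ} {K : Set ℝ}

lemma mapsTo_phiBlock_flatten {L : List (List ℝ)} (hL : ∀ u ∈ L, Set.MapsTo (phiBlock β u) K K) :
    Set.MapsTo (phiBlock β L.flatten) K K := by
  induction L with
  | nil => simpa using Set.mapsTo_id K
  | cons u L ih =>
    rw [List.flatten_cons, funext (phiBlock_append u L.flatten)]
    exact (hL u List.mem_cons_self).comp (ih fun v hv => hL v (List.mem_cons_of_mem u hv))

lemma image_phiBlock_flatten_replicate_subset {u : List ℝ} (hu : Set.MapsTo (phiBlock β u) K K)
    {k : ℕ} (hk : k ≠ 0) :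
    phiBlock β (List.replicate k u).flatten '' K ⊆ phiBlock β u '' K := by
  obtain ⟨k, rfl⟩ := Nat.exists_eq_succ_of_ne_zero hk
  rw [List.replicate_succ, List.flatten_cons, funext (phiBlock_append u _), ← Set.image_image]
  exact Set.image_mono
    (mapsTo_phiBlock_flatten fun v hv => List.eq_of_mem_replicate hv ▸ hu).image_subset

variable {n : ℕ} {P : Fin n → List ℝ}

lemma exists_mem_image_phiBlock_flatten (hK : K ⊆ ⋃ i, phiBlock β (P i) '' K) (p : ℕ)
    {x : ℝ} (hx : x ∈ K) :
    ∃ is : List (Fin n), is.length = p ∧ x ∈ phiBlock β (is.map P).flatten '' K := by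
  induction p generalizing x with
  | zero => exact ⟨[], rfl, x, hx, by simp⟩
  | succ p ih =>
    obtain ⟨i, x', hx', rfl⟩ := Set.mem_iUnion.mp (hK hx)
    obtain ⟨is, hlen, x'', hx'', rfl⟩ := ih hx'
    exact ⟨i :: is, by simp [hlen], x'', hx'', by simp [phiBlock_append]⟩

lemma length_le_length_flatten_map (hP : ∀ i, P i ≠ []) (is : List (Fin n)) :
    is.length ≤ (is.map P).flatten.length := by
  induction is with
  | nil => simp
  | cons i is ih =>
    have := List.length_pos_iff.mpr (hP i)
    simp only [List.map_cons, List.flatten_cons, List.length_append, List.length_cons]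
    omega

end Words

section Matchings

variable {β : ℝ} {n m : ℕ} {P : Fin n → List ℝ} {Q : Fin m → List ℝ} {K₁ K₂ : Set ℝ}

lemma IsMatching.append {u v : List ℝ} (hu : IsMatching P Q u) (hv : IsMatching P Q v) :
    IsMatching P Q (u ++ v) := by
  obtain ⟨is₁, js₁, his₁, hjs₁, hP₁, hQ₁, rfl⟩ := hu
  obtain ⟨is₂, js₂, -, -, hP₂, hQ₂, rfl⟩ := hv
  refine ⟨is₁ ++ is₂, js₁ ++ js₂, by simp [his₁], by simp [hjs₁], ?_, ?_, ?_⟩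
  · simp only [List.map_append, List.flatten_append, List.length_append]
    omega
  · simp only [List.map_append, List.flatten_append, List.length_append]
    omega
  · simp only [List.map_append, List.flatten_append]
    rw [List.zipWith_append (hP₁.trans hQ₁.symm)]

lemma IsMatching.exists_isPrimMatching_append {w : List ℝ} (hw : IsMatching P Q w) :
    ∃ w₁ t, IsPrimMatching P Q w₁ ∧ w = w₁ ++ t ∧ (t = [] ∨ IsMatching P Q t) := by
  induction hlen : w.length using Nat.strong_induction_on generalizing w with
  | _ L ih =>
    by_cases hprim : IsPrimMatching P Q w
    · exact ⟨w, [], hprim, (List.append_nil w).symm, Or.inl rfl⟩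
    obtain ⟨u, v, -, hv, hu, hv', rfl⟩ : ∃ u v : List ℝ, u ≠ [] ∧ v ≠ [] ∧ IsMatching P Q u ∧
        IsMatching P Q v ∧ w = u ++ v := by
      by_contra hsplit
      exact hprim ⟨hw, hsplit⟩
    have hshorter : u.length < L := by
      rw [← hlen, List.length_append]
      have := List.length_pos_iff.mpr hv
      omega
    obtain ⟨w₁, t, hw₁, rfl, ht⟩ := ih _ hshorter hu rfl
    refine ⟨w₁, t ++ v, hw₁, List.append_assoc _ _ _, Or.inr ?_⟩
    rcases ht with rfl | ht
    · exact hv'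
    · exact ht.append hv'

lemma mapsTo_phiBlock_flatten_map (hK : ∀ i, Set.MapsTo (phiBlock β (P i)) K₁ K₁)
    (is : List (Fin n)) : Set.MapsTo (phiBlock β (is.map P).flatten) K₁ K₁ :=
  mapsTo_phiBlock_flatten <| by simpa using fun i _ => hK i

lemma IsMatching.mapsTo_add (hK₁ : ∀ i, Set.MapsTo (phiBlock β (P i)) K₁ K₁)
    (hK₂ : ∀ j, Set.MapsTo (phiBlock β (Q j)) K₂ K₂) {w : List ℝ} (hw : IsMatching P Q w) :
    Set.MapsTo (phiBlock β w) (K₁ + K₂) (K₁ + K₂) := by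
  obtain ⟨is, js, -, -, hP, hQ, rfl⟩ := hw
  rintro _ ⟨x, hx, y, hy, rfl⟩
  rw [phiBlock_zipWith_add (hP.trans hQ.symm)]
  exact Set.add_mem_add (mapsTo_phiBlock_flatten_map hK₁ is hx)
    (mapsTo_phiBlock_flatten_map hK₂ js hy)

lemma IsMatching.image_add_subset_biUnion (hK₁ : ∀ i, Set.MapsTo (phiBlock β (P i)) K₁ K₁)
    (hK₂ : ∀ j, Set.MapsTo (phiBlock β (Q j)) K₂ K₂) {w : List ℝ} (hw : IsMatching P Q w) :
    phiBlock β w '' (K₁ + K₂) ⊆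
      ⋃ w ∈ {w : List ℝ | IsPrimMatching P Q w}, phiBlock β w '' (K₁ + K₂) := by
  obtain ⟨w₁, t, hw₁, rfl, ht⟩ := hw.exists_isPrimMatching_append
  have htK : Set.MapsTo (phiBlock β t) (K₁ + K₂) (K₁ + K₂) := by
    rcases ht with rfl | ht
    · simpa using Set.mapsTo_id _
    · exact ht.mapsTo_add hK₁ hK₂
  rw [funext (phiBlock_append w₁ t), ← Set.image_image]
  exact (Set.image_mono htK.image_subset).trans (Set.subset_biUnion_of_mem (u := fun w =>
    phiBlock β w '' (K₁ + K₂)) hw₁)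

lemma isMatching_zipWith_replicate {is : List (Fin n)} {js : List (Fin m)}
    (hu : (is.map P).flatten ≠ []) (hv : (js.map Q).flatten ≠ []) :
    IsMatching P Q (List.zipWith (· + ·)
      (List.replicate (js.map Q).flatten.length (is.map P).flatten).flatten
      (List.replicate (is.map P).flatten.length (js.map Q).flatten).flatten) := by
  have hflatten {k : ℕ} {α : Type} (R : α → List ℝ) (l : List α) :
      ((List.replicate k l).flatten.map R).flatten =
        (List.replicate k (l.map R).flatten).flatten := by
    simp [List.map_flatten, List.flatten_flatten]
  have hne {α : Type} {k : ℕ} {l : List α} (hk : k ≠ 0) (hl : l ≠ []) :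
      (List.replicate k l).flatten ≠ [] := by
    obtain ⟨k, rfl⟩ := Nat.exists_eq_succ_of_ne_zero hk
    simp [List.replicate_succ, hl]
  refine ⟨(List.replicate (js.map Q).flatten.length is).flatten,
    (List.replicate (is.map P).flatten.length js).flatten, ?_, ?_, ?_, ?_, ?_⟩
  · exact hne (List.length_pos_iff.mpr hv).ne' (by rintro rfl; simp at hu)
  · exact hne (List.length_pos_iff.mpr hu).ne' (by rintro rfl; simp at hv)
  · simp [Nat.mul_comm]
  · simp [Nat.mul_comm]
  · rw [hflatten, hflatten]

lemma exists_isMatching_dist_phiBlock_le (hβ : 1 ≤ β) (hP : ∀ i, P i ≠ []) (hQ : ∀ j, Q j ≠ [])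
    (hK₁ : K₁ = ⋃ i, phiBlock β (P i) '' K₁) (hK₂ : K₂ = ⋃ j, phiBlock β (Q j) '' K₂)
    (hK₁b : Bornology.IsBounded K₁) (hK₂b : Bornology.IsBounded K₂)
    {x y : ℝ} (hx : x ∈ K₁) (hy : y ∈ K₂) (N : ℕ) :
    ∃ w, IsMatching P Q w ∧ ∃ p ∈ K₁ + K₂,
      dist (x + y) (phiBlock β w p) ≤ (Metric.diam K₁ + Metric.diam K₂) / β ^ N := by
  obtain ⟨is, his, x₁, hx₁, rfl⟩ := exists_mem_image_phiBlock_flatten hK₁.subset (N + 1) hx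
  obtain ⟨js, hjs, y₁, hy₁, rfl⟩ := exists_mem_image_phiBlock_flatten hK₂.subset (N + 1) hy
  have hu : N < (is.map P).flatten.length := by
    have := length_le_length_flatten_map hP is
    omega
  have hv : N < (js.map Q).flatten.length := by
    have := length_le_length_flatten_map hQ js
    omega
  set u := (is.map P).flatten
  set v := (js.map Q).flatten
  have hu₀ : u ≠ [] := List.ne_nil_of_length_pos (by omega)
  have hv₀ : v ≠ [] := List.ne_nil_of_length_pos (by omega)
  set U := (List.replicate v.length u).flatten
  set V := (List.replicate u.length v).flatten
  have hUV : U.length = V.length := by simp [U, V, Nat.mul_comm]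
  obtain ⟨x₂, hx₂, hUx⟩ := image_phiBlock_flatten_replicate_subset
    (mapsTo_phiBlock_flatten_map (mapsTo_of_eq_iUnion_image hK₁) is)
    (List.length_pos_iff.mpr hv₀).ne' ⟨x₁, hx₁, rfl⟩
  obtain ⟨y₂, hy₂, hVy⟩ := image_phiBlock_flatten_replicate_subset
    (mapsTo_phiBlock_flatten_map (mapsTo_of_eq_iUnion_image hK₂) js)
    (List.length_pos_iff.mpr hu₀).ne' ⟨y₁, hy₁, rfl⟩
  refine ⟨List.zipWith (· + ·) U V, isMatching_zipWith_replicate hu₀ hv₀, x₁ + y₁,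
    Set.add_mem_add hx₁ hy₁, ?_⟩
  rw [phiBlock_zipWith_add hUV, ← hUx, ← hVy, add_div]
  exact (dist_add_add_le _ _ _ _).trans (add_le_add
    (dist_phiBlock_le_diam_div_pow hβ hK₁b hu.le hx₁ hx₂)
    (dist_phiBlock_le_diam_div_pow hβ hK₂b hv.le hy₁ hy₂))

end Matchings

theorem statement4_general (β : ℝ) (hβ : 1 < β) (n m : ℕ)
    (nv : Fin n → ℕ) (hnv : ∀ i, 0 < nv i) (a : Fin n → ℝ)
    (mv : Fin m → ℕ) (hmv : ∀ j, 0 < mv j) (b : Fin m → ℝ)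
    (K₁ K₂ : Set ℝ)
    (hK₁c : IsCompact K₁)
    (hK₁ : K₁ = ⋃ i : Fin n, (fun x => x / β ^ nv i + a i) '' K₁)
    (hK₂c : IsCompact K₂)
    (hK₂ : K₂ = ⋃ j : Fin m, (fun x => x / β ^ mv j + b j) '' K₂)
    (P : Fin n → List ℝ) (Q : Fin m → List ℝ)
    (hP : P = fun i => digitBlock β (nv i) (a i))
    (hQ : Q = fun j => digitBlock β (mv j) (b j)) :
    closure (⋃ w ∈ {w : List ℝ | IsPrimMatching P Q w}, phiBlock β w '' (K₁ + K₂))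
      = K₁ + K₂ := by
  have hβ₀ : β ≠ 0 := by positivity
  have hK₁' : K₁ = ⋃ i, phiBlock β (P i) '' K₁ := by
    simpa only [hP, phiBlock_digitBlock hβ₀ (hnv _)] using hK₁
  have hK₂' : K₂ = ⋃ j, phiBlock β (Q j) '' K₂ := by
    simpa only [hQ, phiBlock_digitBlock hβ₀ (hmv _)] using hK₂
  have hP₀ : ∀ i, P i ≠ [] := by simp [hP, digitBlock]
  have hQ₀ : ∀ j, Q j ≠ [] := by simp [hQ, digitBlock]
  have hmaps₁ := mapsTo_of_eq_iUnion_image hK₁'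
  have hmaps₂ := mapsTo_of_eq_iUnion_image hK₂'
  refine subset_antisymm (closure_minimal (Set.iUnion₂_subset fun w hw =>
    (hw.1.mapsTo_add hmaps₁ hmaps₂).image_subset) (hK₁c.add hK₂c).isClosed) ?_
  rintro _ ⟨x, hx, y, hy, rfl⟩
  refine Metric.mem_closure_iff.2 fun ε hε => ?_
  obtain ⟨N, hN⟩ := pow_unbounded_of_one_lt ((Metric.diam K₁ + Metric.diam K₂) / ε) hβ
  obtain ⟨w, hw, p, hp, hdist⟩ := exists_isMatching_dist_phiBlock_le hβ.le hP₀ hQ₀ hK₁' hK₂'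
    hK₁c.isBounded hK₂c.isBounded hx hy N
  refine ⟨_, hw.image_add_subset_biUnion hmaps₁ hmaps₂ ⟨p, hp, rfl⟩, hdist.trans_lt ?_⟩
  rw [div_lt_iff₀ hε] at hN
  rwa [div_lt_iff₀ (by positivity), mul_comm]

/-- if there are infinitely many Matchings, then
`closure( ⋃_{w ∈ D} φ_w(K₁+K₂) ) = K₁+K₂`, where `D` is the set of primitive Matchings. -/
theorem statement4 (β : ℝ) (hβ : 1 < β) (n m : ℕ) (hn : 0 < n) (hm : 0 < m)
    (nv : Fin n → ℕ) (hnv : ∀ i, 0 < nv i) (a : Fin n → ℝ)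
    (mv : Fin m → ℕ) (hmv : ∀ j, 0 < mv j) (b : Fin m → ℝ)
    (K₁ K₂ : Set ℝ)
    (hK₁ne : K₁.Nonempty) (hK₁c : IsCompact K₁)
    (hK₁ : K₁ = ⋃ i : Fin n, (fun x => x / β ^ nv i + a i) '' K₁)
    (hK₂ne : K₂.Nonempty) (hK₂c : IsCompact K₂)
    (hK₂ : K₂ = ⋃ j : Fin m, (fun x => x / β ^ mv j + b j) '' K₂)
    (P : Fin n → List ℝ) (Q : Fin m → List ℝ)
    (hP : P = fun i => digitBlock β (nv i) (a i))
    (hQ : Q = fun j => digitBlock β (mv j) (b j))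
    (hinf : {w : List ℝ | IsMatching P Q w}.Infinite) :
    closure (⋃ w ∈ {w : List ℝ | IsPrimMatching P Q w}, phiBlock β w '' (K₁ + K₂))
      = K₁ + K₂ :=
  statement4_general β hβ n m nv hnv a mv hmv b K₁ K₂ hK₁c hK₁ hK₂c hK₂ P Q hP hQ
end

section
/- Suppose there exists a positive integer k such that n = m, n_1 = ⋯ = n_{n−1} = k and n_n = 2k, and m_1 = ⋯ = m_{m−1} = k and m_m = 2k (i.e. both D₁ and D₂ consist of blocks of length k except the last block, which has length 2k). Then the set C is countable. -/
open Finset Pointwise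

/-!
Write a coding as `a = x + y` with `x` cut into blocks `W t` of `P` and `y` into blocks `V u`
of `Q`. Between two cut points common to `x` and `y` the word `a` reads a Matching, so in the
tail where `a` contains no Matching there is at most one common cut point. All cut points are
multiples of `k` and consecutive ones are at most `2k` apart, so of any two consecutive
multiples of `k` one is a cut point of `y`; hence two consecutive cut points of `x` at
distance `k` would force a second common cut point. So eventually `x` and `y` both use only
their unique block of length `2k`, `a` is eventually `2k`-periodic with values in a finite
set, and there are only countably many such sequences.
-/

section Periodic

variable {α : Type*}

lemma eq_of_periodic_of_eqOn {x y : ℕ → α} {N p : ℕ} (hp : 0 < p)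
    (hx : ∀ j ≥ N, x (j + p) = x j) (hy : ∀ j ≥ N, y (j + p) = y j)
    (hxy : ∀ j < N + p, x j = y j) : x = y := by
  funext j
  induction j using Nat.strong_induction_on with
  | _ j ih =>
    rcases lt_or_ge j (N + p) with hj | hj
    · exact hxy j hj
    · obtain ⟨i, rfl⟩ : ∃ i, j = i + p := ⟨j - p, by omega⟩
      rw [hx i (by omega), hy i (by omega), ih i (by omega)]

lemma countable_setOf_eventually_periodic {F : Set α} (hF : F.Countable) {p : ℕ} (hp : 0 < p) :
    {a : ℕ → α | (∀ j, a j ∈ F) ∧ ∃ N, ∀ j ≥ N, a (j + p) = a j}.Countable := by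
  refine Set.Countable.mono
    (s₂ := ⋃ N : ℕ, {a : ℕ → α | (∀ j, a j ∈ F) ∧ ∀ j ≥ N, a (j + p) = a j})
    (fun a ⟨haF, N, hN⟩ => Set.mem_iUnion.2 ⟨N, haF, hN⟩) (Set.countable_iUnion fun N => ?_)
  refine Set.MapsTo.countable_of_injOn (f := fun a (i : Fin (N + p)) => a i)
    (t := {g : Fin (N + p) → α | ∀ i, g i ∈ F}) (fun a ha i => ha.1 i) ?_
    (Set.countable_pi fun _ => hF)
  exact fun a ha b hb hab =>
    eq_of_periodic_of_eqOn hp ha.2 hb.2 fun j hj => congrFun hab ⟨j, hj⟩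

end Periodic

section Slices

variable {α : Type*}

def seqSlice (x : ℕ → α) (c l : ℕ) : List α :=
  List.ofFn fun i : Fin l => x (c + i)

@[simp]
lemma length_seqSlice (x : ℕ → α) (c l : ℕ) : (seqSlice x c l).length = l :=
  List.length_ofFn

lemma seqSlice_add (x : ℕ → α) (c l₁ l₂ : ℕ) :
    seqSlice x c (l₁ + l₂) = seqSlice x c l₁ ++ seqSlice x (c + l₁) l₂ := by
  simp only [seqSlice, List.ofFn_add, Fin.val_castLE, Fin.val_natAdd, add_assoc]

lemma seqSlice_add_seq (x y : ℕ → ℝ) (c l : ℕ) :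
    seqSlice (fun j => x j + y j) c l = List.zipWith (· + ·) (seqSlice x c l) (seqSlice y c l) :=
  List.ext_getElem (by simp) fun i _ _ => by simp [seqSlice]

def blockStart (W : ℕ → List α) (t : ℕ) : ℕ :=
  ∑ s ∈ range t, (W s).length

lemma blockStart_succ (W : ℕ → List α) (t : ℕ) :
    blockStart W (t + 1) = blockStart W t + (W t).length :=
  sum_range_succ _ _

lemma dvd_blockStart {W : ℕ → List α} {k : ℕ} (h : ∀ t, k ∣ (W t).length) (t : ℕ) :
    k ∣ blockStart W t :=
  dvd_sum fun s _ => h s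

end Slices

namespace IsConcatSeq

variable {W : ℕ → List ℝ} {x : ℕ → ℝ}

lemma strictMono_blockStart (h : IsConcatSeq W x) : StrictMono (blockStart W) :=
  strictMono_nat_of_lt_succ fun t => by
    rw [blockStart_succ]
    have := List.length_pos_iff.2 (h.1 t)
    omega

lemma le_blockStart (h : IsConcatSeq W x) (t : ℕ) : t ≤ blockStart W t :=
  h.strictMono_blockStart.id_le t

lemma apply_blockStart_add (h : IsConcatSeq W x) {t i : ℕ} (hi : i < (W t).length) :
    x (blockStart W t + i) = (W t)[i] :=
  h.2 t ⟨i, hi⟩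

lemma seqSlice_blockStart (h : IsConcatSeq W x) (t : ℕ) :
    seqSlice x (blockStart W t) (W t).length = W t :=
  List.ext_getElem (by simp) fun i hi _ => by
    simpa [seqSlice] using h.apply_blockStart_add (by simpa using hi)

lemma flatten_eq_seqSlice (h : IsConcatSeq W x) (t d : ℕ) :
    ((List.range' t d).map W).flatten =
      seqSlice x (blockStart W t) (blockStart W (t + d) - blockStart W t) := by
  induction d generalizing t with
  | zero => simp [seqSlice]
  | succ d ih =>
    have hmono := h.strictMono_blockStart.monotone (show t + 1 ≤ t + 1 + d by omega)
    have hlen : blockStart W (t + (d + 1)) - blockStart W t =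
        (W t).length + (blockStart W (t + 1 + d) - blockStart W (t + 1)) := by
      rw [show t + (d + 1) = t + 1 + d by omega, blockStart_succ] at *
      omega
    rw [List.range'_succ, List.map_cons, List.flatten_cons, ih, hlen, seqSlice_add,
      h.seqSlice_blockStart, blockStart_succ]

lemma exists_blockStart_le_lt (h : IsConcatSeq W x) (j : ℕ) :
    ∃ t, blockStart W t ≤ j ∧ j < blockStart W (t + 1) := by
  classical
  have hex : ∃ t, j < blockStart W (t + 1) := ⟨j, by have := h.le_blockStart (j + 1); omega⟩
  refine ⟨Nat.find hex, ?_, Nat.find_spec hex⟩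
  rcases Nat.eq_zero_or_eq_succ_pred (Nat.find hex) with h0 | hs
  · rw [h0]
    simp [blockStart]
  · have := Nat.find_min hex (show Nat.find hex - 1 < Nat.find hex by omega)
    rw [hs]
    simpa using this

lemma exists_mem (h : IsConcatSeq W x) (j : ℕ) : ∃ t, x j ∈ W t := by
  obtain ⟨t, hle, hlt⟩ := h.exists_blockStart_le_lt j
  have hi : j - blockStart W t < (W t).length := by rw [blockStart_succ] at hlt; omega
  refine ⟨t, ?_⟩
  rw [show j = blockStart W t + (j - blockStart W t) by omega, h.apply_blockStart_add hi]
  exact List.getElem_mem hi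

lemma periodic_of_eventually_const (h : IsConcatSeq W x) {T : ℕ} {B : List ℝ}
    (hB : ∀ t ≥ T, W t = B) : ∀ j ≥ blockStart W T, x (j + B.length) = x j := by
  intro j hj
  obtain ⟨t, hle, hlt⟩ := h.exists_blockStart_le_lt j
  have htT : T ≤ t := by
    by_contra! htT
    have := h.strictMono_blockStart.monotone (show t + 1 ≤ T by omega)
    omega
  have hnext : blockStart W (t + 1) = blockStart W t + B.length := by
    rw [blockStart_succ, hB t htT]
  obtain ⟨i, rfl⟩ : ∃ i, j = blockStart W t + i := ⟨j - blockStart W t, by omega⟩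
  have hit : i < (W t).length := by rw [hB t htT]; omega
  have hit' : i < (W (t + 1)).length := by rw [hB (t + 1) (by omega)]; omega
  rw [show blockStart W t + i + B.length = blockStart W (t + 1) + i by omega,
    h.apply_blockStart_add hit, h.apply_blockStart_add hit']
  simp only [hB t htT, hB (t + 1) (by omega)]

lemma blockStart_eq_or_eq_add (h : IsConcatSeq W x) {k c : ℕ}
    (hlen : ∀ t, (W t).length = k ∨ (W t).length = 2 * k) (hc : k ∣ c) :
    (∃ t, blockStart W t = c) ∨ ∃ t, blockStart W t = c + k := by
  obtain ⟨t, hle, hlt⟩ := h.exists_blockStart_le_lt c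
  have hkt : k ∣ blockStart W t :=
    dvd_blockStart (fun s => by rcases hlen s with hs | hs <;> simp [hs]) t
  have hdvd : k ∣ c - blockStart W t := Nat.dvd_sub hc hkt
  rw [blockStart_succ] at hlt
  by_cases hzero : c - blockStart W t = 0
  · exact Or.inl ⟨t, by omega⟩
  · have hge : k ≤ c - blockStart W t := Nat.le_of_dvd (by omega) hdvd
    rcases hlen t with hl | hl
    · omega
    · have hk : c - blockStart W t - k = 0 :=
        Nat.eq_zero_of_dvd_of_lt (Nat.dvd_sub hdvd dvd_rfl) (by omega)
      exact Or.inr ⟨t + 1, by rw [blockStart_succ, hl]; omega⟩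

end IsConcatSeq

section Matching

variable {n m : ℕ} {P : Fin n → List ℝ} {Q : Fin m → List ℝ} {W V : ℕ → List ℝ}
  {x y : ℕ → ℝ}

lemma isMatching_seqSlice (hW : ∀ t, W t ∈ Set.range P) (hV : ∀ u, V u ∈ Set.range Q)
    (hx : IsConcatSeq W x) (hy : IsConcatSeq V y) {t t' u u' : ℕ} (ht : t < t') (hu : u < u')
    (hc : blockStart W t = blockStart V u) (hc' : blockStart W t' = blockStart V u') :
    IsMatching P Q
      (seqSlice (fun j => x j + y j) (blockStart W t) (blockStart W t' - blockStart W t)) := by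
  choose i hi using hW
  choose j hj using hV
  have hxW : (((List.range' t (t' - t)).map i).map P).flatten =
      seqSlice x (blockStart W t) (blockStart W t' - blockStart W t) := by
    rw [List.map_map, show P ∘ i = W from funext hi, hx.flatten_eq_seqSlice,
      Nat.add_sub_cancel' ht.le]
  have hyV : (((List.range' u (u' - u)).map j).map Q).flatten =
      seqSlice y (blockStart W t) (blockStart W t' - blockStart W t) := by
    rw [List.map_map, show Q ∘ j = V from funext hj, hy.flatten_eq_seqSlice,
      Nat.add_sub_cancel' hu.le, hc, hc']
  refine ⟨(List.range' t (t' - t)).map i, (List.range' u (u' - u)).map j, ?_, ?_, ?_, ?_, ?_⟩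
  · simp; omega
  · simp; omega
  · rw [hxW]; simp
  · rw [hyV]; simp
  · rw [hxW, hyV, seqSlice_add_seq]

lemma exists_bound_of_common_blockStart {a : ℕ → ℝ} {N : ℕ}
    (hW : ∀ t, W t ∈ Set.range P) (hV : ∀ u, V u ∈ Set.range Q)
    (hx : IsConcatSeq W x) (hy : IsConcatSeq V y) (hxy : ∀ j, a j = x j + y j)
    (hN : ∀ j ≥ N, ∀ l : ℕ, 1 ≤ l →
      ¬ IsMatching P Q (List.ofFn fun i : Fin l => a (j + i))) :
    ∃ M, ∀ t u, blockStart W t = blockStart V u → blockStart W t ≤ M := by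
  obtain rfl : a = fun j => x j + y j := funext hxy
  by_contra! hcon
  obtain ⟨t, u, hc, htN⟩ := hcon N
  obtain ⟨t', u', hc', ht'⟩ := hcon (blockStart W t)
  have ht : t < t' := hx.strictMono_blockStart.lt_iff_lt.1 ht'
  have hu : u < u' := hy.strictMono_blockStart.lt_iff_lt.1 (hc ▸ hc' ▸ ht')
  exact hN _ htN.le _ (by omega) (isMatching_seqSlice hW hV hx hy ht hu hc hc')

lemma length_eq_two_mul_of_lt {k M : ℕ} (hx : IsConcatSeq W x) (hy : IsConcatSeq V y)
    (hWlen : ∀ t, (W t).length = k ∨ (W t).length = 2 * k)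
    (hVlen : ∀ u, (V u).length = k ∨ (V u).length = 2 * k)
    (hM : ∀ t u, blockStart W t = blockStart V u → blockStart W t ≤ M) :
    ∀ t > M, (W t).length = 2 * k := by
  intro t ht
  have hMt : M < blockStart W t := ht.trans_le (hx.le_blockStart t)
  have hkt : k ∣ blockStart W t :=
    dvd_blockStart (fun s => by rcases hWlen s with hs | hs <;> simp [hs]) t
  refine (hWlen t).resolve_left fun hlen => ?_
  rcases hy.blockStart_eq_or_eq_add hVlen hkt with ⟨u, hu⟩ | ⟨u, hu⟩
  · exact absurd (hM t u hu.symm) (not_le.2 hMt)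
  · have := hM (t + 1) u (by rw [blockStart_succ, hlen, hu])
    rw [blockStart_succ] at this
    omega

end Matching

structure ShortLongBlocks (k : ℕ) (Ws : Set (List ℝ)) : Prop where
  length_eq : ∀ w ∈ Ws, w.length = k ∨ w.length = 2 * k
  subsingleton_long : {w ∈ Ws | w.length = 2 * k}.Subsingleton

section Coding

variable {n m k : ℕ} {P : Fin n → List ℝ} {Q : Fin m → List ℝ}

def digits (P : Fin n → List ℝ) : Set ℝ := ⋃ i, {d | d ∈ P i}

lemma countable_digits (P : Fin n → List ℝ) : (digits P).Countable :=
  Set.countable_iUnion fun i => (P i).finite_toSet.countable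

lemma IsCoding.mem_digits_add {a : ℕ → ℝ} (ha : IsCoding P Q a) (j : ℕ) :
    a j ∈ digits P + digits Q := by
  obtain ⟨x, y, ⟨W, hW, hx⟩, ⟨V, hV, hy⟩, hxy⟩ := ha
  obtain ⟨t, hxt⟩ := hx.exists_mem j
  obtain ⟨u, hyu⟩ := hy.exists_mem j
  obtain ⟨i, hi⟩ := hW t
  obtain ⟨i', hi'⟩ := hV u
  exact ⟨x j, Set.mem_iUnion.2 ⟨i, hi ▸ hxt⟩, y j, Set.mem_iUnion.2 ⟨i', hi' ▸ hyu⟩,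
    (hxy j).symm⟩

lemma IsConcatSeq.eventually_periodic {W : ℕ → List ℝ} {x : ℕ → ℝ} {Ws : Set (List ℝ)}
    {M : ℕ} (hx : IsConcatSeq W x) (hW : ∀ t, W t ∈ Ws) (hWs : ShortLongBlocks k Ws)
    (hlong : ∀ t > M, (W t).length = 2 * k) :
    ∀ j ≥ blockStart W (M + 1), x (j + 2 * k) = x j := by
  have hconst : ∀ t ≥ M + 1, W t = W (M + 1) := fun t ht =>
    hWs.subsingleton_long (x := W t) ⟨hW t, hlong t (by omega)⟩
      (y := W (M + 1)) ⟨hW (M + 1), hlong (M + 1) (by omega)⟩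
  simpa [hlong (M + 1) (by omega)] using hx.periodic_of_eventually_const hconst

lemma eventually_periodic_of_mem_Cset (hP : ShortLongBlocks k (Set.range P))
    (hQ : ShortLongBlocks k (Set.range Q)) {a : ℕ → ℝ} (ha : a ∈ Cset P Q) :
    ∃ N, ∀ j ≥ N, a (j + 2 * k) = a j := by
  obtain ⟨⟨x, y, ⟨W, hW, hx⟩, ⟨V, hV, hy⟩, hxy⟩, N, hN⟩ := ha
  have hWlen : ∀ t, (W t).length = k ∨ (W t).length = 2 * k := fun t => hP.length_eq _ (hW t)
  have hVlen : ∀ u, (V u).length = k ∨ (V u).length = 2 * k := fun u => hQ.length_eq _ (hV u)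
  obtain ⟨M, hM⟩ := exists_bound_of_common_blockStart hW hV hx hy hxy hN
  have hM' : ∀ u t, blockStart V u = blockStart W t → blockStart V u ≤ M :=
    fun u t h => h ▸ hM t u h.symm
  have hxper := hx.eventually_periodic hW hP (length_eq_two_mul_of_lt hx hy hWlen hVlen hM)
  have hyper := hy.eventually_periodic hV hQ (length_eq_two_mul_of_lt hy hx hVlen hWlen hM')
  refine ⟨max (blockStart W (M + 1)) (blockStart V (M + 1)), fun j hj => ?_⟩
  rw [hxy, hxy, hxper j (le_of_max_le_left hj), hyper j (le_of_max_le_right hj)]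

theorem countable_Cset (hk : 0 < k) (hP : ShortLongBlocks k (Set.range P))
    (hQ : ShortLongBlocks k (Set.range Q)) : (Cset P Q).Countable := by
  have hF := (countable_digits P).image2 (countable_digits Q) (· + ·)
  refine (countable_setOf_eventually_periodic hF (by omega : 0 < 2 * k)).mono fun a ha => ?_
  exact ⟨ha.1.mem_digits_add, eventually_periodic_of_mem_Cset hP hQ ha⟩

end Coding

lemma length_digitBlock (β : ℝ) {k : ℕ} (hk : 0 < k) (a : ℝ) :
    (digitBlock β k a).length = k := by
  simp only [digitBlock, List.length_append, List.length_replicate, List.length_singleton]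
  omega

lemma shortLongBlocks_range {n k : ℕ} (hk : 0 < k) {P : Fin n → List ℝ}
    (hlen : ∀ i : Fin n, (P i).length = if (i : ℕ) = n - 1 then 2 * k else k) :
    ShortLongBlocks k (Set.range P) where
  length_eq := by
    rintro _ ⟨i, rfl⟩
    rw [hlen]
    split_ifs <;> simp
  subsingleton_long := by
    rintro _ ⟨⟨i, rfl⟩, hi⟩ _ ⟨⟨j, rfl⟩, hj⟩
    rw [hlen] at hi hj
    split_ifs at hi hj with hi' hj'
    · exact congrArg P (Fin.ext (hi'.trans hj'.symm))
    all_goals omega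

theorem statement10_general (β : ℝ) (n : ℕ)
    (k : ℕ) (hk : 0 < k)
    (nv : Fin n → ℕ) (a : Fin n → ℝ)
    (mv : Fin n → ℕ) (b : Fin n → ℝ)
    (hnv : ∀ i : Fin n, nv i = if (i : ℕ) = n - 1 then 2 * k else k)
    (hmv : ∀ j : Fin n, mv j = if (j : ℕ) = n - 1 then 2 * k else k)
    (P : Fin n → List ℝ) (Q : Fin n → List ℝ)
    (hP : P = fun i => digitBlock β (nv i) (a i))
    (hQ : Q = fun j => digitBlock β (mv j) (b j)) :
    (Cset P Q).Countable := by
  have hPlen : ∀ i : Fin n, (P i).length = if (i : ℕ) = n - 1 then 2 * k else k := fun i => by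
    rw [hP, ← hnv, length_digitBlock β (by rw [hnv]; split_ifs <;> omega)]
  have hQlen : ∀ j : Fin n, (Q j).length = if (j : ℕ) = n - 1 then 2 * k else k := fun j => by
    rw [hQ, ← hmv, length_digitBlock β (by rw [hmv]; split_ifs <;> omega)]
  exact countable_Cset hk (shortLongBlocks_range hk hPlen) (shortLongBlocks_range hk hQlen)

/-- if both digital sets consist of blocks of length `k` except for the last
block, which has length `2k`, then the set `C` is countable. -/
theorem statement10 (β : ℝ) (hβ : 1 < β) (n : ℕ) (hn : 0 < n)
    (k : ℕ) (hk : 0 < k)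
    (nv : Fin n → ℕ) (a : Fin n → ℝ)
    (mv : Fin n → ℕ) (b : Fin n → ℝ)
    (hnv : ∀ i : Fin n, nv i = if (i : ℕ) = n - 1 then 2 * k else k)
    (hmv : ∀ j : Fin n, mv j = if (j : ℕ) = n - 1 then 2 * k else k)
    (P : Fin n → List ℝ) (Q : Fin n → List ℝ)
    (hP : P = fun i => digitBlock β (nv i) (a i))
    (hQ : Q = fun j => digitBlock β (mv j) (b j)) :
    (Cset P Q).Countable :=
  statement10_general β n k hk nv a mv b hnv hmv P Q hP hQ
end
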